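/- lim_{R→∞} (1/R²) ∫₀^R ∫₀^R I₀(2√(xy)) e^{-x-y} |x - y| dy dx = 0, where I₀ is the modified Bessel function of order zero. -/

import Mathlib

open MeasureTheory Real Filter

/-- The modified Bessel function of the first kind of order zero. -/
noncomputable def besselI0 (z : ℝ) : ℝ :=
  ∑' k : ℕ, (z / 2) ^ (2 * k) / ((Nat.factorial k : ℝ)) ^ 2

/-!
Expanding `I₀(2√(xy)) = ∑ₖ (xy)ᵏ / k!²` and integrating term by term against the Gamma densities
`yᵏ e^{-y} / k!` turns `∫₀^∞ I₀(2√(xy)) e^{-x-y} ((x - y)² + c²) dy` into a second moment of a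
Poisson variable of mean `x`; it equals `2x + 2 + c²`. Since `|x - y| ≤ ((x - y)² + c²) / (2c)`, the
choice `c = √(2x + 2)` bounds the inner integral by `√(2x + 2)`. Hence the double integral over
`[0, R]²` is at most `R √(2R + 2) = o(R²)`.
-/

open Set Nat

lemma hasSum_pow_div_factorial (x : ℝ) : HasSum (fun k : ℕ => x ^ k / k !) (exp x) := by
  rw [exp_eq_exp_ℝ]
  exact NormedSpace.expSeries_div_hasSum_exp x

lemma hasSum_natCast_mul_pow_div_factorial (x : ℝ) :
    HasSum (fun k : ℕ => k * (x ^ k / k !)) (x * exp x) := by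
  refine (hasSum_nat_add_iff' 1).1 ?_
  have shift : (fun k : ℕ => ((k + 1 : ℕ) : ℝ) * (x ^ (k + 1) / (k + 1)!)) =
      fun k => x * (x ^ k / k !) := by
    ext k
    rw [factorial_succ]
    push_cast
    field_simp
    ring
  have h := (hasSum_pow_div_factorial x).mul_left x
  rw [← shift] at h
  simpa using h

lemma hasSum_natCast_mul_sub_one_mul_pow_div_factorial (x : ℝ) :
    HasSum (fun k : ℕ => k * (k - 1) * (x ^ k / k !)) (x ^ 2 * exp x) := by
  refine (hasSum_nat_add_iff' 2).1 ?_
  have shift : (fun k : ℕ => ((k + 2 : ℕ) : ℝ) * ((k + 2 : ℕ) - 1) * (x ^ (k + 2) / (k + 2)!)) =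
      fun k => x ^ 2 * (x ^ k / k !) := by
    ext k
    rw [factorial_succ, factorial_succ]
    push_cast
    field_simp
    ring
  have h := (hasSum_pow_div_factorial x).mul_left (x ^ 2)
  rw [← shift] at h
  simpa [Finset.sum_range_succ] using h

lemma hasSum_pow_div_factorial_mul_sq_sub_add (x c : ℝ) :
    HasSum (fun k : ℕ => x ^ k / k ! * ((x - (k + 1)) ^ 2 + (k + 1) + c ^ 2))
      (exp x * (2 * x + 2 + c ^ 2)) := by
  convert ((hasSum_natCast_mul_sub_one_mul_pow_div_factorial x).add
    ((hasSum_pow_div_factorial x).mul_left (x ^ 2 - 2 * x + 2 + c ^ 2))).add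
    ((hasSum_natCast_mul_pow_div_factorial x).mul_left (4 - 2 * x)) using 1
  · ext k
    ring
  · ring

lemma integral_pow_mul_exp_neg_Ioi (n : ℕ) : ∫ y in Ioi (0 : ℝ), y ^ n * exp (-y) = n ! := by
  rw [← Gamma_nat_eq_factorial, Gamma_eq_integral (by positivity)]
  refine setIntegral_congr_fun measurableSet_Ioi fun y _ => ?_
  simp [rpow_natCast, mul_comm]

lemma integrableOn_pow_mul_exp_neg_Ioi (n : ℕ) :
    IntegrableOn (fun y : ℝ => y ^ n * exp (-y)) (Ioi 0) := by
  refine (GammaIntegral_convergent (s := n + 1) (by positivity)).congr_fun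
    (fun y _ => ?_) measurableSet_Ioi
  simp [rpow_natCast, mul_comm]

lemma pow_mul_exp_neg_mul_sq_sub_add_sq_eq (k : ℕ) (x c y : ℝ) :
    y ^ k * exp (-y) * ((x - y) ^ 2 + c ^ 2) =
      (x ^ 2 + c ^ 2) * (y ^ k * exp (-y)) + (-2 * x) * (y ^ (k + 1) * exp (-y)) +
        y ^ (k + 2) * exp (-y) := by
  ring

lemma integrableOn_pow_mul_exp_neg_mul_sq_sub_add_sq_Ioi (k : ℕ) (x c : ℝ) :
    IntegrableOn (fun y : ℝ => y ^ k * exp (-y) * ((x - y) ^ 2 + c ^ 2)) (Ioi 0) := by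
  simp_rw [pow_mul_exp_neg_mul_sq_sub_add_sq_eq]
  exact (((integrableOn_pow_mul_exp_neg_Ioi k).const_mul _).add
    ((integrableOn_pow_mul_exp_neg_Ioi (k + 1)).const_mul _)).add
    (integrableOn_pow_mul_exp_neg_Ioi (k + 2))

lemma integral_pow_mul_exp_neg_mul_sq_sub_add_sq_Ioi (k : ℕ) (x c : ℝ) :
    ∫ y in Ioi (0 : ℝ), y ^ k * exp (-y) * ((x - y) ^ 2 + c ^ 2) =
      k ! * ((x - (k + 1)) ^ 2 + (k + 1) + c ^ 2) := by
  simp_rw [pow_mul_exp_neg_mul_sq_sub_add_sq_eq]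
  have h₀ := integrableOn_pow_mul_exp_neg_Ioi k
  have h₁ := integrableOn_pow_mul_exp_neg_Ioi (k + 1)
  have h₂ := integrableOn_pow_mul_exp_neg_Ioi (k + 2)
  rw [integral_add ?_ h₂, integral_add ?_ ?_, integral_const_mul, integral_const_mul,
    integral_pow_mul_exp_neg_Ioi, integral_pow_mul_exp_neg_Ioi, integral_pow_mul_exp_neg_Ioi,
    factorial_succ (k + 1), factorial_succ k]
  · push_cast
    ring
  · exact h₀.const_mul _
  · exact h₁.const_mul _
  · exact (h₀.const_mul _).add (h₁.const_mul _)

lemma besselI0_nonneg (z : ℝ) : 0 ≤ besselI0 z :=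
  tsum_nonneg fun k => by rw [pow_mul]; positivity

lemma besselI0_two_mul_sqrt {w : ℝ} (hw : 0 ≤ w) :
    besselI0 (2 * √w) = ∑' k : ℕ, w ^ k / (k ! : ℝ) ^ 2 := by
  simp only [besselI0, mul_div_cancel_left₀ _ (two_ne_zero' ℝ), pow_mul, sq_sqrt hw]

theorem integral_besselI0_mul_exp_mul_sq_sub_add_sq_Ioi {x : ℝ} (hx : 0 ≤ x) (c : ℝ) :
    ∫ y in Ioi (0 : ℝ), besselI0 (2 * √(x * y)) * exp (-x - y) * ((x - y) ^ 2 + c ^ 2) =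
      2 * x + 2 + c ^ 2 := by
  set F : ℕ → ℝ → ℝ := fun k y =>
    x ^ k / (k ! : ℝ) ^ 2 * exp (-x) * (y ^ k * exp (-y) * ((x - y) ^ 2 + c ^ 2))
  have hF_int (k : ℕ) : IntegrableOn (F k) (Ioi 0) :=
    (integrableOn_pow_mul_exp_neg_mul_sq_sub_add_sq_Ioi k x c).const_mul _
  have hF_nonneg (k : ℕ) : ∀ y ∈ Ioi (0 : ℝ), 0 ≤ F k y := fun y (hy : 0 < y) => by positivity
  have hF_sum : HasSum (fun k => ∫ y in Ioi 0, F k y) (2 * x + 2 + c ^ 2) := by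
    have h := (hasSum_pow_div_factorial_mul_sq_sub_add x c).mul_left (exp (-x))
    rw [← mul_assoc, ← exp_add, neg_add_cancel, exp_zero, one_mul] at h
    refine (funext fun k => ?_ : (fun k => ∫ y in Ioi 0, F k y) = _) ▸ h
    rw [integral_const_mul, integral_pow_mul_exp_neg_mul_sq_sub_add_sq_Ioi]
    field_simp
  have hF_norm (k : ℕ) : ∫ y in Ioi 0, ‖F k y‖ = ∫ y in Ioi 0, F k y :=
    setIntegral_congr_fun measurableSet_Ioi fun y hy => norm_of_nonneg (hF_nonneg k y hy)
  have h := hasSum_integral_of_summable_integral_norm hF_int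
    (hF_sum.summable.congr fun k => (hF_norm k).symm)
  rw [hF_sum.unique h]
  refine setIntegral_congr_fun measurableSet_Ioi fun y (hy : 0 < y) => ?_
  simp only [F, besselI0_two_mul_sqrt (mul_nonneg hx hy.le), ← tsum_mul_right]
  congr 1 with k
  rw [sub_eq_add_neg, exp_add, mul_pow]
  ring

lemma abs_le_sq_add_sq_div_two_mul {c : ℝ} (hc : 0 < c) (a : ℝ) :
    |a| ≤ (a ^ 2 + c ^ 2) / (2 * c) := by
  rw [le_div_iff₀ (by positivity), ← sq_abs a]
  nlinarith [sq_nonneg (|a| - c)]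

theorem integral_Ioc_besselI0_mul_exp_mul_abs_sub_le {x : ℝ} (hx : 0 ≤ x) (R : ℝ) :
    ∫ y in Ioc 0 R, besselI0 (2 * √(x * y)) * exp (-x - y) * |x - y| ≤ √(2 * x + 2) := by
  set c := √(2 * x + 2)
  have hc : 0 < c := sqrt_pos.2 (by linarith)
  have hc2 : c ^ 2 = 2 * x + 2 := sq_sqrt (by linarith)
  set g : ℝ → ℝ := fun y => besselI0 (2 * √(x * y)) * exp (-x - y) * ((x - y) ^ 2 + c ^ 2) / (2 * c)
  have hg : ∫ y in Ioi 0, g y = (2 * x + 2 + c ^ 2) / (2 * c) := by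
    rw [integral_div, integral_besselI0_mul_exp_mul_sq_sub_add_sq_Ioi hx]
  have hg_int : IntegrableOn g (Ioi 0) := Integrable.of_integral_ne_zero (by rw [hg]; positivity)
  have hg_nonneg : ∀ y, 0 ≤ g y := fun y => by have := besselI0_nonneg (2 * √(x * y)); positivity
  calc ∫ y in Ioc 0 R, besselI0 (2 * √(x * y)) * exp (-x - y) * |x - y|
      ≤ ∫ y in Ioc 0 R, g y := by
        refine integral_mono_of_nonneg (.of_forall fun y => ?_)
          (hg_int.mono_set Ioc_subset_Ioi_self) (.of_forall fun y => ?_)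
        · have := besselI0_nonneg (2 * √(x * y))
          positivity
        · simp only [g, mul_div_assoc]
          gcongr
          · exact mul_nonneg (besselI0_nonneg _) (exp_nonneg _)
          · exact abs_le_sq_add_sq_div_two_mul hc _
    _ ≤ ∫ y in Ioi 0, g y :=
        setIntegral_mono_set hg_int (.of_forall hg_nonneg) Ioc_subset_Ioi_self.eventuallyLE
    _ = c := by
        rw [hg, ← hc2]
        field_simp
        ring

lemma norm_intervalIntegral_besselI0_mul_exp_mul_abs_sub_le {x R : ℝ} (hx : 0 ≤ x) (hxR : x ≤ R) :
    ‖∫ y in (0:ℝ)..R, besselI0 (2 * √(x * y)) * exp (-x - y) * |x - y|‖ ≤ √(2 * R + 2) := by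
  rw [intervalIntegral.integral_of_le (hx.trans hxR), norm_of_nonneg (setIntegral_nonneg
    measurableSet_Ioc fun y _ => by have := besselI0_nonneg (2 * √(x * y)); positivity)]
  exact (integral_Ioc_besselI0_mul_exp_mul_abs_sub_le hx R).trans (sqrt_le_sqrt (by linarith))

theorem stmt_13 :
    Filter.Tendsto
      (fun R : ℝ => (1 / R ^ 2) * ∫ x in (0:ℝ)..R, ∫ y in (0:ℝ)..R,
        besselI0 (2 * Real.sqrt (x * y)) * Real.exp (-x - y) * |x - y|)
      Filter.atTop (nhds 0) := by
  refine squeeze_zero_norm' ?_ (tendsto_const_nhds (x := (2 : ℝ)).div_atTop tendsto_sqrt_atTop)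
  filter_upwards [eventually_ge_atTop 1] with R hR
  have hR0 : 0 < R := by linarith
  have hinner : ∀ x ∈ uIoc 0 R,
      ‖∫ y in (0:ℝ)..R, besselI0 (2 * √(x * y)) * exp (-x - y) * |x - y|‖ ≤ √(2 * R + 2) := by
    intro x hx
    rw [uIoc_of_le hR0.le] at hx
    exact norm_intervalIntegral_besselI0_mul_exp_mul_abs_sub_le hx.1.le hx.2
  calc ‖1 / R ^ 2 * ∫ x in (0:ℝ)..R, ∫ y in (0:ℝ)..R,
        besselI0 (2 * √(x * y)) * exp (-x - y) * |x - y|‖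
      ≤ 1 / R ^ 2 * (√(2 * R + 2) * |R - 0|) := by
        rw [norm_mul, norm_of_nonneg (by positivity)]
        gcongr
        exact intervalIntegral.norm_integral_le_of_norm_le_const hinner
    _ ≤ 1 / R ^ 2 * (√(4 * R) * R) := by
        rw [sub_zero, abs_of_pos hR0]
        gcongr
        linarith
    _ = 2 * (√R / R) := by
        rw [sqrt_mul zero_le_four, show (4 : ℝ) = 2 ^ 2 by norm_num, sqrt_sq zero_le_two]
        field_simp
    _ = 2 / √R := by rw [sqrt_div_self', mul_one_div]
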